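/- For positive integers ℓ < n and real (or complex) numbers x_1,...,x_n, the sum over set partitions π of {1,...,n} with exactly ℓ blocks of the product over blocks B of the rising factorial (sum_{b in B} x_b)^{rising (|B|-1)} equals binom(n-1, ℓ-1) times the rising factorial (x_1+...+x_n)^{rising (n-ℓ)}. -/

import Mathlib

open MvPolynomial Finset

/-- `P` is a set partition of the finset `S`: its parts are nonempty, pairwise
disjoint, and their union is `S`. -/
abbrev IsSetPartition {α : Type*} [DecidableEq α] (S : Finset α)
    (P : Finset (Finset α)) : Prop :=
  (∀ B ∈ P, B.Nonempty) ∧ (∀ B ∈ P, ∀ B' ∈ P, B ≠ B' → Disjoint B B') ∧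
    P.sup id = S

/-- The finset of all set partitions of a finset `S` in a finite type. -/
def partitionsOf {α : Type*} [Fintype α] [DecidableEq α] (S : Finset α) :
    Finset (Finset (Finset α)) :=
  Finset.univ.filter (IsSetPartition S)


/-- The rising factorial `x^(rising k) = x (x+1) ⋯ (x+k-1)`. -/
def risingFactorial (x : ℂ) (k : ℕ) : ℂ := ∏ i ∈ Finset.range k, (x + i)

/-!
Write `F_ℓ(x)` for the left-hand side over a finset `S` of size `n` and `Φ_ℓ(x)` for the
right-hand side. Splitting off the block of a fixed element `i`, and then splitting that block in
two, shows that raising `x_i` by one changes `F_ℓ` by `ℓ` times `F_{ℓ+1}` at the raised point, as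
soon as the identity is known for two blocks; `Φ_ℓ` obeys the same difference equation because
`ℓ * C(n-1, ℓ) = (n-ℓ) * C(n-1, ℓ-1)`. By induction on `2n - ℓ`, `F_ℓ - Φ_ℓ` is then
`1`-periodic in every coordinate; being polynomial in each coordinate, it is constant in each,
hence equal to its value at `x = 0`, where both sides are `1` if `ℓ = n` and `0` otherwise.
-/

open Function

theorem risingFactorial_succ (y : ℂ) (k : ℕ) :
    risingFactorial y (k + 1) = y * risingFactorial (y + 1) k := by
  simp only [risingFactorial, prod_range_succ', Nat.cast_add, Nat.cast_one, Nat.cast_zero,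
    add_zero]
  rw [mul_comm]
  exact congrArg (y * ·) (prod_congr rfl fun j _ => by ring)

theorem risingFactorial_add_one_sub (y : ℂ) (k : ℕ) :
    risingFactorial (y + 1) k - risingFactorial y k = k * risingFactorial (y + 1) (k - 1) := by
  cases k with
  | zero => simp [risingFactorial]
  | succ k =>
    rw [risingFactorial_succ y]
    simp only [risingFactorial, prod_range_succ, Nat.add_sub_cancel]
    push_cast
    ring

theorem risingFactorial_zero_left (k : ℕ) : risingFactorial 0 k = if k = 0 then 1 else 0 := by
  cases k with
  | zero => simp [risingFactorial]
  | succ k => simp [risingFactorial_succ]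

theorem Finset.sum_update_add {ι M : Type*} [DecidableEq ι] [AddCommMonoid M] {s : Finset ι}
    {i : ι} (hi : i ∈ s) (x : ι → M) (c : M) :
    ∑ j ∈ s, update x i (x i + c) j = ∑ j ∈ s, x j + c := by
  rw [sum_update_of_mem hi, sdiff_singleton_eq_erase, ← add_sum_erase s x hi, add_right_comm]

theorem Finset.apply_piecewise_zero_of_forall_update {ι β γ : Type*} [DecidableEq ι] [Zero β]
    {g : (ι → β) → γ} (T : Finset ι) (h : ∀ i ∈ T, ∀ x, g (update x i 0) = g x) (x : ι → β) :
    g (T.piecewise 0 x) = g x := by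
  induction T using Finset.induction_on with
  | empty => rw [piecewise_empty]
  | insert a T _ ih =>
    rw [piecewise_insert, Pi.zero_apply, h a (mem_insert_self a T),
      ih fun i hi => h i (mem_insert_of_mem hi)]

section PolynomialMaps

variable (R : Type*) [CommRing R]

noncomputable def polynomialMaps : Subalgebra R (R → R) := (Polynomial.aeval (id : R → R)).range

variable {R}

theorem id_mem_polynomialMaps : (id : R → R) ∈ polynomialMaps R :=
  ⟨Polynomial.X, Polynomial.aeval_X _⟩

theorem const_mem_polynomialMaps (c : R) : (fun _ => c : R → R) ∈ polynomialMaps R :=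
  (polynomialMaps R).algebraMap_mem c

theorem eq_of_periodic_of_mem_polynomialMaps [IsDomain R] [CharZero R] {f : R → R}
    (hf : f ∈ polynomialMaps R) (hper : ∀ t, f (t + 1) = f t) (t : R) : f t = f 0 := by
  obtain ⟨p, rfl⟩ := hf
  simp only [AlgHom.toRingHom_eq_coe, RingHom.coe_coe, Polynomial.aeval_fn_apply, id,
    Polynomial.coe_aeval_eq_eval] at hper ⊢
  have hnat (n : ℕ) : p.eval (n : R) = p.eval 0 := by
    induction n with
    | zero => simp
    | succ n ih => rw [Nat.cast_succ, hper, ih]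
  have hconst : p = Polynomial.C (p.eval 0) := by
    refine Polynomial.eq_of_infinite_eval_eq _ _ ((Set.infinite_range_of_injective
      Nat.cast_injective).mono ?_)
    rintro _ ⟨n, rfl⟩
    simp [hnat n]
  rw [hconst]
  simp

end PolynomialMaps

section SetPartitions

variable {α : Type*} [DecidableEq α]

def setPartitions (S : Finset α) (ℓ : ℕ) : Finset (Finset (Finset α)) :=
  S.powerset.powerset.filter fun P => IsSetPartition S P ∧ P.card = ℓ

namespace IsSetPartition

variable {S D : Finset α} {P : Finset (Finset α)}

theorem subset (h : IsSetPartition S P) (hD : D ∈ P) : D ⊆ S :=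
  h.2.2 ▸ le_sup (f := id) hD

theorem exists_mem (h : IsSetPartition S P) {i : α} (hi : i ∈ S) : ∃ B ∈ P, i ∈ B := by
  rw [← h.2.2] at hi
  simpa using mem_sup.1 hi

theorem card_le (h : IsSetPartition S P) : P.card ≤ S.card := by
  rw [← h.2.2, sup_eq_biUnion]
  exact card_le_card_biUnion (fun B hB B' hB' hne => h.2.1 B hB B' hB' hne) h.1

theorem erase (h : IsSetPartition S P) (hD : D ∈ P) : IsSetPartition (S \ D) (P.erase D) := by
  refine ⟨fun B hB => h.1 B (mem_of_mem_erase hB),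
    fun B hB B' hB' => h.2.1 B (mem_of_mem_erase hB) B' (mem_of_mem_erase hB'), ?_⟩
  have hdisj : Disjoint ((P.erase D).sup id) D := Finset.disjoint_sup_left.2 fun B hB =>
    h.2.1 B (mem_of_mem_erase hB) D hD (ne_of_mem_erase hB)
  conv_rhs => rw [← h.2.2, ← insert_erase hD]
  rw [sup_insert, id, sup_eq_union, union_sdiff_left, sdiff_eq_self_of_disjoint hdisj]

theorem notMem_of_sdiff (hD : D.Nonempty) (h : IsSetPartition (S \ D) P) : D ∉ P := fun hDP => by
  obtain ⟨a, ha⟩ := hD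
  exact (mem_sdiff.1 (h.subset hDP ha)).2 ha

theorem insert (hD : D.Nonempty) (hDS : D ⊆ S) (h : IsSetPartition (S \ D) P) :
    IsSetPartition S (insert D P) := by
  have hdisj : ∀ B ∈ P, Disjoint D B := fun B hB =>
    disjoint_of_subset_right (h.subset hB) disjoint_sdiff
  refine ⟨forall_mem_insert _ _ _ |>.2 ⟨hD, h.1⟩, ?_, ?_⟩
  · intro B hB B' hB' hne
    rcases mem_insert.1 hB with hB | hB <;> rcases mem_insert.1 hB' with hB' | hB'
    · exact absurd (hB.trans hB'.symm) hne
    · exact hB ▸ hdisj B' hB'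
    · exact hB' ▸ (hdisj B hB).symm
    · exact h.2.1 B hB B' hB' hne
  · rw [sup_insert, h.2.2]
    exact union_sdiff_of_subset hDS

end IsSetPartition

variable {S : Finset α} {ℓ : ℕ}

theorem mem_setPartitions {P : Finset (Finset α)} :
    P ∈ setPartitions S ℓ ↔ IsSetPartition S P ∧ P.card = ℓ := by
  simp only [setPartitions, mem_filter, mem_powerset, and_iff_right_iff_imp]
  exact fun h B hB => mem_powerset.2 (h.1.subset hB)

theorem setPartitions_zero : setPartitions S 0 = if S = ∅ then {∅} else ∅ := by
  ext P
  rw [mem_setPartitions, card_eq_zero]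
  split_ifs with hS
  · rw [mem_singleton]
    refine ⟨fun h => h.2, ?_⟩
    rintro rfl
    exact ⟨⟨by simp, by simp, by simp [hS]⟩, rfl⟩
  · rw [iff_false_intro (notMem_empty P), iff_false, not_and]
    rintro h rfl
    exact hS (h.2.2.symm.trans sup_empty)

theorem setPartitions_eq_empty_of_card_lt (h : S.card < ℓ) : setPartitions S ℓ = ∅ :=
  eq_empty_of_forall_notMem fun P hP => by
    obtain ⟨hpart, rfl⟩ := mem_setPartitions.1 hP
    exact absurd hpart.card_le (not_le.2 h)

theorem sum_setPartitions_succ_sum_mem {M : Type*} [AddCommMonoid M] (S : Finset α) (ℓ : ℕ)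
    (f : Finset α → Finset (Finset α) → M) :
    ∑ P ∈ setPartitions S (ℓ + 1), ∑ D ∈ P, f D (P.erase D) =
      ∑ D ∈ S.powerset.filter Finset.Nonempty, ∑ R ∈ setPartitions (S \ D) ℓ, f D R := by
  rw [sum_sigma', sum_sigma']
  refine sum_nbij' (fun p => ⟨p.2, p.1.erase p.2⟩) (fun q => ⟨Insert.insert q.1 q.2, q.1⟩)
    ?_ ?_ ?_ ?_ fun _ _ => rfl
  · rintro ⟨P, D⟩ h
    simp only [mem_sigma, mem_setPartitions, mem_filter, mem_powerset] at h ⊢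
    obtain ⟨⟨hP, hcard⟩, hD⟩ := h
    exact ⟨⟨hP.subset hD, hP.1 D hD⟩, hP.erase hD, by rw [card_erase_of_mem hD, hcard]; rfl⟩
  · rintro ⟨D, R⟩ h
    simp only [mem_sigma, mem_setPartitions, mem_filter, mem_powerset] at h ⊢
    obtain ⟨⟨hDS, hD⟩, hR, hcard⟩ := h
    exact ⟨⟨hR.insert hD hDS, by rw [card_insert_of_notMem (hR.notMem_of_sdiff hD), hcard]⟩,
      mem_insert_self D R⟩
  · rintro ⟨P, D⟩ h
    simp only [mem_sigma] at h
    simp [insert_erase h.2]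
  · rintro ⟨D, R⟩ h
    simp only [mem_sigma, mem_setPartitions, mem_filter] at h
    simp [erase_insert (h.2.1.notMem_of_sdiff h.1.2)]

theorem sum_powerset_filter_sum_powerset_filter {M : Type*} [AddCommMonoid M] (S : Finset α)
    (i : α) (f : Finset α → Finset α → M) :
    ∑ D ∈ S.powerset.filter (i ∈ ·), ∑ E ∈ D.powerset.filter (i ∈ ·), f E (D \ E) =
      ∑ E ∈ S.powerset.filter (i ∈ ·), ∑ G ∈ (S \ E).powerset, f E G := by
  rw [sum_sigma', sum_sigma']
  refine sum_nbij' (fun p => ⟨p.2, p.1 \ p.2⟩) (fun q => ⟨q.1 ∪ q.2, q.1⟩) ?_ ?_ ?_ ?_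
    fun _ _ => rfl
  · rintro ⟨D, E⟩ h
    simp only [mem_sigma, mem_filter, mem_powerset] at h ⊢
    exact ⟨⟨h.2.1.trans h.1.1, h.2.2⟩, sdiff_subset_sdiff h.1.1 le_rfl⟩
  · rintro ⟨E, G⟩ h
    simp only [mem_sigma, mem_filter, mem_powerset] at h ⊢
    exact ⟨⟨union_subset h.1.1 (h.2.trans sdiff_subset), mem_union_left G h.1.2⟩,
      subset_union_left, h.1.2⟩
  · rintro ⟨D, E⟩ h
    simp only [mem_sigma, mem_filter, mem_powerset] at h
    simp [union_sdiff_of_subset h.2.1]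
  · rintro ⟨E, G⟩ h
    simp only [mem_sigma, mem_filter, mem_powerset] at h
    simp [union_sdiff_cancel_left (disjoint_of_subset_right h.2 disjoint_sdiff)]

end SetPartitions

section PartitionSum

variable {α : Type*}

def blockWeight (x : α → ℂ) (B : Finset α) : ℂ :=
  risingFactorial (∑ b ∈ B, x b) (B.card - 1)

def partitionSumFormula (x : α → ℂ) (S : Finset α) (ℓ : ℕ) : ℂ :=
  ((S.card - 1).choose (ℓ - 1) : ℂ) * risingFactorial (∑ b ∈ S, x b) (S.card - ℓ)

theorem blockWeight_eq_partitionSumFormula (x : α → ℂ) (B : Finset α) :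
    blockWeight x B = partitionSumFormula x B 1 := by
  simp [blockWeight, partitionSumFormula]

theorem partitionSumFormula_of_eq_zero {S : Finset α} {y : α → ℂ} (hy : ∀ j ∈ S, y j = 0) {m : ℕ}
    (hm : m + 1 ≤ S.card) : partitionSumFormula y S (m + 1) = if m + 1 = S.card then 1 else 0 := by
  rw [partitionSumFormula, sum_eq_zero hy, risingFactorial_zero_left]
  by_cases h : m + 1 = S.card
  · rw [if_pos (by omega), if_pos h, ← h]
    simp
  · rw [if_neg (by omega), if_neg h, mul_zero]

theorem partitionSumFormula_update_sub [DecidableEq α] {S : Finset α} {i : α} (hi : i ∈ S)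
    (x : α → ℂ) (m : ℕ) :
    partitionSumFormula (update x i (x i + 1)) S (m + 1) - partitionSumFormula x S (m + 1) =
      (m + 1) * partitionSumFormula (update x i (x i + 1)) S (m + 2) := by
  have hchoose : (((S.card - 1).choose m : ℕ) : ℂ) * ((S.card - (m + 1) : ℕ) : ℂ) =
      (S.card - 1).choose (m + 1) * (m + 1) := by
    have := Nat.choose_succ_right_eq (S.card - 1) m
    rw [show S.card - 1 - m = S.card - (m + 1) by omega] at this
    exact_mod_cast this.symm
  simp only [partitionSumFormula, sum_update_add hi, Nat.add_sub_cancel,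
    show m + 2 - 1 = m + 1 from rfl, ← mul_sub, risingFactorial_add_one_sub,
    show S.card - (m + 1) - 1 = S.card - (m + 2) by omega]
  linear_combination risingFactorial (∑ b ∈ S, x b + 1) (S.card - (m + 2)) * hchoose

theorem blockWeight_update_sub [DecidableEq α] {D : Finset α} {i : α} (hi : i ∈ D)
    (x : α → ℂ) :
    blockWeight (update x i (x i + 1)) D - blockWeight x D =
      partitionSumFormula (update x i (x i + 1)) D 2 := by
  simpa [← blockWeight_eq_partitionSumFormula] using partitionSumFormula_update_sub hi x 0

variable [DecidableEq α]

def partitionSum (x : α → ℂ) (S : Finset α) (ℓ : ℕ) : ℂ :=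
  ∑ P ∈ setPartitions S ℓ, ∏ B ∈ P, blockWeight x B

variable {S : Finset α} {ℓ : ℕ}

theorem partitionSum_congr {x y : α → ℂ} (h : ∀ j ∈ S, x j = y j) :
    partitionSum x S ℓ = partitionSum y S ℓ := by
  refine sum_congr rfl fun P hP => prod_congr rfl fun B hB => ?_
  have hBS := (mem_setPartitions.1 hP).1.subset hB
  rw [blockWeight, blockWeight, sum_congr rfl fun b hb => h b (hBS hb)]

theorem partitionSum_update_of_notMem {i : α} (hi : i ∉ S) (x : α → ℂ) (t : ℂ) :
    partitionSum (update x i t) S ℓ = partitionSum x S ℓ :=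
  partitionSum_congr fun _ hj => update_of_ne (ne_of_mem_of_not_mem hj hi) _ _

theorem partitionSum_zero (x : α → ℂ) (S : Finset α) :
    partitionSum x S 0 = if S = ∅ then 1 else 0 := by
  rw [partitionSum, setPartitions_zero]
  split_ifs <;> simp

theorem partitionSum_of_card_lt (x : α → ℂ) (h : S.card < ℓ) : partitionSum x S ℓ = 0 := by
  rw [partitionSum, setPartitions_eq_empty_of_card_lt h, sum_empty]

theorem partitionSum_succ_eq_sum_mem {i : α} (hi : i ∈ S) (x : α → ℂ) (ℓ : ℕ) :
    partitionSum x S (ℓ + 1) =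
      ∑ D ∈ S.powerset.filter (i ∈ ·), blockWeight x D * partitionSum x (S \ D) ℓ := by
  have hblock (P) (hP : P ∈ setPartitions S (ℓ + 1)) :
      ∑ D ∈ P, (if i ∈ D then blockWeight x D * ∏ B ∈ P.erase D, blockWeight x B else 0) =
        ∏ B ∈ P, blockWeight x B := by
    have hpart := (mem_setPartitions.1 hP).1
    obtain ⟨B, hB, hiB⟩ := hpart.exists_mem hi
    rw [sum_eq_single_of_mem B hB, if_pos hiB, mul_prod_erase _ _ hB]
    exact fun D hD hDB => if_neg fun hiD =>
      disjoint_left.1 (hpart.2.1 D hD B hB hDB) hiD hiB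
  rw [partitionSum, ← sum_congr rfl hblock]
  refine (sum_setPartitions_succ_sum_mem S ℓ fun D R =>
    if i ∈ D then blockWeight x D * ∏ B ∈ R, blockWeight x B else 0).trans ?_
  simp only [sum_filter]
  refine sum_congr rfl fun D _ => ?_
  by_cases hiD : i ∈ D
  · simp [hiD, show D.Nonempty from ⟨i, hiD⟩, partitionSum, mul_sum]
  · simp [hiD]

theorem partitionSum_one (x : α → ℂ) (S : Finset α) :
    partitionSum x S 1 = if S.Nonempty then blockWeight x S else 0 := by
  split_ifs with hS
  · obtain ⟨i, hi⟩ := hS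
    rw [partitionSum_succ_eq_sum_mem hi, sum_eq_single_of_mem S (by simp [hi])]
    · simp [partitionSum_zero]
    · intro D hD hDS
      have hSD : S \ D ≠ ∅ := fun h => hDS <|
        subset_antisymm (mem_powerset.1 (mem_filter.1 hD).1) (sdiff_eq_empty_iff_subset.1 h)
      rw [partitionSum_zero, if_neg hSD, mul_zero]
  · rw [not_nonempty_iff_eq_empty.1 hS]
    exact partitionSum_of_card_lt x (by simp)

theorem sum_powerset_partitionSum_one_mul (x : α → ℂ) (S : Finset α) (ℓ : ℕ) :
    ∑ G ∈ S.powerset, partitionSum x G 1 * partitionSum x (S \ G) ℓ =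
      (ℓ + 1) * partitionSum x S (ℓ + 1) := by
  have hblock (P) (hP : P ∈ setPartitions S (ℓ + 1)) :
      ∑ D ∈ P, blockWeight x D * ∏ B ∈ P.erase D, blockWeight x B =
        (ℓ + 1) * ∏ B ∈ P, blockWeight x B := by
    rw [sum_congr rfl fun D hD => mul_prod_erase _ _ hD, sum_const,
      (mem_setPartitions.1 hP).2, nsmul_eq_mul]
    push_cast
    ring
  rw [partitionSum, mul_sum, ← sum_congr rfl hblock]
  refine Eq.trans ?_ (sum_setPartitions_succ_sum_mem S ℓ fun D R =>
    blockWeight x D * ∏ B ∈ R, blockWeight x B).symm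
  rw [sum_filter]
  refine sum_congr rfl fun G _ => ?_
  rw [partitionSum_one]
  split_ifs <;> simp [partitionSum, mul_sum]

theorem partitionSum_of_eq_zero {y : α → ℂ} (hy : ∀ j ∈ S, y j = 0) :
    partitionSum y S ℓ = if ℓ = S.card then 1 else 0 := by
  induction S using Finset.induction_on generalizing ℓ with
  | empty =>
    cases ℓ with
    | zero => simp [partitionSum_zero]
    | succ ℓ => simpa using partitionSum_of_card_lt y (by simp)
  | insert a T haT ih =>
    cases ℓ with
    | zero => simp [partitionSum_zero, card_insert_of_notMem haT]
    | succ ℓ =>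
      rw [partitionSum_succ_eq_sum_mem (mem_insert_self a T),
        sum_eq_single_of_mem {a} (by simp), insert_sdiff_of_mem _ (mem_singleton_self a),
        sdiff_singleton_eq_erase, erase_eq_of_notMem haT,
        ih fun j hj => hy j (mem_insert_of_mem hj), card_insert_of_notMem haT]
      · simp [blockWeight, risingFactorial]
      · intro D hD hDa
        obtain ⟨hDS, haD⟩ := mem_filter.1 hD
        have hcard : 1 < D.card :=
          one_lt_card_iff_nontrivial.2 ((eq_singleton_or_nontrivial haD).resolve_left hDa)
        rw [blockWeight, sum_eq_zero fun j hj => hy j (mem_powerset.1 hDS hj),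
          risingFactorial_zero_left, if_neg (by omega), zero_mul]

theorem partitionSum_update_sub {i : α} (hi : i ∈ S) (x : α → ℂ) (m : ℕ)
    (htwo : ∀ D ⊆ S, i ∈ D → m ≤ (S \ D).card →
      partitionSum (update x i (x i + 1)) D 2 = partitionSumFormula (update x i (x i + 1)) D 2) :
    partitionSum (update x i (x i + 1)) S (m + 1) - partitionSum x S (m + 1) =
      (m + 1) * partitionSum (update x i (x i + 1)) S (m + 2) := by
  set x' := update x i (x i + 1)
  have hagree {T : Finset α} (hT : i ∉ T) (ℓ : ℕ) : partitionSum x' T ℓ = partitionSum x T ℓ :=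
    partitionSum_update_of_notMem hT x _
  have hblock : ∀ D ∈ S.powerset.filter (i ∈ ·),
      (blockWeight x' D - blockWeight x D) * partitionSum x (S \ D) m =
        partitionSum x' D 2 * partitionSum x (S \ D) m := by
    intro D hD
    obtain ⟨hDS, hiD⟩ := mem_filter.1 hD
    rcases le_or_gt m (S \ D).card with hm | hm
    · rw [htwo D (mem_powerset.1 hDS) hiD hm, blockWeight_update_sub hiD]
    · rw [partitionSum_of_card_lt x hm, mul_zero, mul_zero]
  calc partitionSum x' S (m + 1) - partitionSum x S (m + 1)
      = ∑ D ∈ S.powerset.filter (i ∈ ·),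
          (blockWeight x' D - blockWeight x D) * partitionSum x (S \ D) m := by
        rw [partitionSum_succ_eq_sum_mem hi, partitionSum_succ_eq_sum_mem hi, ← sum_sub_distrib]
        exact sum_congr rfl fun D hD => by
          rw [hagree (notMem_sdiff_of_mem_right (mem_filter.1 hD).2), sub_mul]
    _ = ∑ D ∈ S.powerset.filter (i ∈ ·), ∑ E ∈ D.powerset.filter (i ∈ ·),
          blockWeight x' E *
            (partitionSum x (D \ E) 1 * partitionSum x ((S \ E) \ (D \ E)) m) := by
        refine sum_congr rfl fun D hD => ?_
        rw [hblock D hD, partitionSum_succ_eq_sum_mem (mem_filter.1 hD).2, sum_mul]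
        refine sum_congr rfl fun E hE => ?_
        have hsdiff : (S \ E) \ (D \ E) = S \ D := by
          rw [sdiff_sdiff_left, sup_eq_union,
            union_sdiff_of_subset (mem_powerset.1 (mem_filter.1 hE).1)]
        rw [hagree (notMem_sdiff_of_mem_right (mem_filter.1 hE).2), hsdiff, mul_assoc]
    _ = ∑ E ∈ S.powerset.filter (i ∈ ·),
          blockWeight x' E * ∑ G ∈ (S \ E).powerset, partitionSum x G 1 *
            partitionSum x ((S \ E) \ G) m := by
        rw [sum_powerset_filter_sum_powerset_filter S i
          fun E G => blockWeight x' E * (partitionSum x G 1 * partitionSum x ((S \ E) \ G) m)]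
        simp only [mul_sum]
    _ = (m + 1) * partitionSum x' S (m + 2) := by
        rw [partitionSum_succ_eq_sum_mem hi, mul_sum]
        refine sum_congr rfl fun E hE => ?_
        rw [sum_powerset_partitionSum_one_mul,
          hagree (notMem_sdiff_of_mem_right (mem_filter.1 hE).2)]
        ring

theorem risingFactorial_sum_update_mem_polynomialMaps (x : α → ℂ) (i : α) (B : Finset α)
    (k : ℕ) : (fun t => risingFactorial (∑ b ∈ B, update x i t b) k) ∈ polynomialMaps ℂ := by
  have hsum : (fun t => ∑ b ∈ B, update x i t b) ∈ polynomialMaps ℂ := by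
    have : (fun t => ∑ b ∈ B, update x i t b) = ∑ b ∈ B, fun t => update x i t b := by
      ext t; simp
    rw [this]
    refine sum_mem fun b _ => ?_
    rcases eq_or_ne b i with rfl | hb
    · simp only [update_self]
      exact id_mem_polynomialMaps
    · simpa [update_of_ne hb] using const_mem_polynomialMaps (x b)
  have : (fun t => risingFactorial (∑ b ∈ B, update x i t b) k) =
      ∏ j ∈ range k, ((fun t => ∑ b ∈ B, update x i t b) + fun _ => (j : ℂ)) := by
    ext t; simp [risingFactorial]
  rw [this]
  exact prod_mem fun j _ => add_mem hsum (const_mem_polynomialMaps _)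

theorem partitionSum_sub_formula_update_mem_polynomialMaps (x : α → ℂ) (i : α) (S : Finset α)
    (ℓ : ℕ) : (fun t => partitionSum (update x i t) S ℓ - partitionSumFormula (update x i t) S ℓ)
      ∈ polynomialMaps ℂ := by
  have : (fun t => partitionSum (update x i t) S ℓ - partitionSumFormula (update x i t) S ℓ) =
      ∑ P ∈ setPartitions S ℓ, ∏ B ∈ P,
          (fun t => risingFactorial (∑ b ∈ B, update x i t b) (B.card - 1)) -
        (fun _ => ((S.card - 1).choose (ℓ - 1) : ℂ)) *
          fun t => risingFactorial (∑ b ∈ S, update x i t b) (S.card - ℓ) := by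
    ext t; simp [partitionSum, partitionSumFormula, blockWeight]
  rw [this]
  exact sub_mem (sum_mem fun P _ => prod_mem fun B _ =>
      risingFactorial_sum_update_mem_polynomialMaps x i B _)
    (mul_mem (const_mem_polynomialMaps _) (risingFactorial_sum_update_mem_polynomialMaps x i S _))

theorem partitionSum_eq_partitionSumFormula (S : Finset α) (hS : S.Nonempty) (ℓ : ℕ)
    (hℓ : 1 ≤ ℓ) (x : α → ℂ) : partitionSum x S ℓ = partitionSumFormula x S ℓ := by
  obtain ⟨m, rfl⟩ := Nat.exists_eq_add_of_le' hℓ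
  rcases lt_or_ge S.card (m + 1) with hlt | hle
  · have hchoose : (S.card - 1).choose (m + 1 - 1) = 0 :=
      Nat.choose_eq_zero_of_lt (by have := hS.card_pos; omega)
    rw [partitionSum_of_card_lt x hlt, partitionSumFormula, hchoose, Nat.cast_zero, zero_mul]
  set Ψ : (α → ℂ) → ℂ := fun y => partitionSum y S (m + 1) - partitionSumFormula y S (m + 1)
  have hperiodic (i) (hi : i ∈ S) (y : α → ℂ) : Ψ (update y i (y i + 1)) = Ψ y := by
    have hsub := partitionSum_update_sub hi y m fun D hDS hiD hm =>
      partitionSum_eq_partitionSumFormula D ⟨i, hiD⟩ 2 one_le_two _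
    have hnext := partitionSum_eq_partitionSumFormula S hS (m + 2) (by omega)
      (update y i (y i + 1))
    linear_combination hsub - partitionSumFormula_update_sub hi y m + (m + 1) * hnext
  have hupdate (i) (hi : i ∈ S) (y : α → ℂ) : Ψ (update y i 0) = Ψ y := by
    have := eq_of_periodic_of_mem_polynomialMaps
      (partitionSum_sub_formula_update_mem_polynomialMaps y i S (m + 1))
      (fun t => by simpa using hperiodic i hi (update y i t)) (y i)
    simpa using this.symm
  have hzero : Ψ (S.piecewise (0 : α → ℂ) x) = 0 := by
    have hy : ∀ j ∈ S, S.piecewise (0 : α → ℂ) x j = 0 := fun j hj => by simp [hj]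
    simp only [Ψ, partitionSum_of_eq_zero hy, partitionSumFormula_of_eq_zero hy hle, sub_self]
  rw [← sub_eq_zero, ← hzero, apply_piecewise_zero_of_forall_update S hupdate]
termination_by 2 * S.card + 1 - ℓ
decreasing_by
  · have := card_sdiff_of_subset hDS
    have := card_le_card hDS
    have := card_pos.2 ⟨i, hiD⟩
    omega
  · omega

end PartitionSum

theorem partition_rising_factorial_identity (n ℓ : ℕ) (hℓ : 0 < ℓ) (hℓn : ℓ < n)
    (x : Fin n → ℂ) :
    ∑ P ∈ (partitionsOf (Finset.univ : Finset (Fin n))).filter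
        (fun P => P.card = ℓ),
      ∏ B ∈ P, risingFactorial (∑ b ∈ B, x b) (B.card - 1) =
      ((n - 1).choose (ℓ - 1) : ℂ) * risingFactorial (∑ i, x i) (n - ℓ) := by
  have hpart : (partitionsOf (univ : Finset (Fin n))).filter (fun P => P.card = ℓ) =
      setPartitions univ ℓ := by
    ext P
    simp [partitionsOf, mem_setPartitions]
  have hn : (univ : Finset (Fin n)).Nonempty := univ_nonempty_iff.2 ⟨⟨0, by omega⟩⟩
  simpa [hpart, partitionSum, blockWeight, partitionSumFormula] using
    partitionSum_eq_partitionSumFormula univ hn ℓ hℓ x
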